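/- arXiv:1801.04559 — 3 statements merged into one kernel-verified Lean document; each statement's English description precedes it below -/
import Mathlib

section
/- For every λ ∈ [λ*, 1) there exists a unique x ∈ (0, ρ] such that x·C'(x)/C(x) = 1/λ. -/
/-!
For `0 < x < y`, the quantity `x C'(x) / C(x)` is the mean of `n` under the weights
`c n xⁿ / n!`, and passing from `x` to `y` reweights by `(y / x)ⁿ`, which increases with `n`.
Chebyshev's correlation inequality therefore makes `x ↦ x C'(x) / C(x)` strictly increasing
on `(0, ρ]` once two distinct indices carry positive weight: `1`, and some `N ≥ 2`
supplied by the asymptotics. Since `C(x) ≥ c 1 · x`, the quotient is at most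
`C'(x) / c 1`, which tends to `1` as `x → 0⁺`, while at `ρ` it equals `1 / λ*`; the
intermediate value theorem gives a solution and monotonicity its uniqueness.
-/

open Asymptotics Filter Nat

/-- `C(x) = ∑_{n} c n · xⁿ/n!`. -/
noncomputable def Cf (c : ℕ → ℝ) (x : ℝ) : ℝ := ∑' n : ℕ, c n * x ^ n / (n ! : ℝ)

/-- `C'(x) = ∑_{n} c (n+1) · xⁿ/n!`, the derivative of `C`. -/
noncomputable def Cd (c : ℕ → ℝ) (x : ℝ) : ℝ := ∑' n : ℕ, c (n + 1) * x ^ n / (n ! : ℝ)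

/-- `C''(x) = ∑_{n} c (n+2) · xⁿ/n!`, the second derivative of `C`. -/
noncomputable def Cdd (c : ℕ → ℝ) (x : ℝ) : ℝ := ∑' n : ℕ, c (n + 2) * x ^ n / (n ! : ℝ)

/-- `λ* = C(ρ)/(ρ·C'(ρ))`. -/
noncomputable def lamStar (c : ℕ → ℝ) (ρ : ℝ) : ℝ := Cf c ρ / (ρ * Cd c ρ)

/-- `a(n,N)`: the coefficient of `xⁿ` in the `N`-th power of the formal power series
`∑_{m} (c m/m!)·xᵐ`. -/
noncomputable def acoeff (c : ℕ → ℝ) (n N : ℕ) : ℝ :=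
  PowerSeries.coeff (R := ℝ) n ((PowerSeries.mk fun m : ℕ => c m / (m ! : ℝ)) ^ N)

open Set Topology

theorem mul_lt_mul_of_hasSum_of_monovary {ι : Type*} {w f g : ι → ℝ} {A B C D : ℝ}
    (hw : ∀ n, 0 ≤ w n) (hfg : Monovary f g) (hA : HasSum w A)
    (hB : HasSum (fun n => f n * w n) B) (hC : HasSum (fun n => g n * w n) C)
    (hD : HasSum (fun n => f n * g n * w n) D) {i j : ι} (hi : 0 < w i) (hj : 0 < w j)
    (hfij : f i < f j) (hgij : g i < g j) :
    B * C < D * A := by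
  -- `2 (D A - B C) = ∑ₙ ∑ₘ wₙ wₘ (fₘ - fₙ) (gₘ - gₙ)`, a sum of nonnegative terms.
  have hcorr (n : ι) : HasSum (fun m => w m * ((f m - f n) * (g m - g n)))
      (D - f n * C - g n * B + f n * g n * A) :=
    (((hD.sub (hC.mul_left (f n))).sub (hB.mul_left (g n))).add
      (hA.mul_left (f n * g n))).congr_fun fun m => by ring
  have htotal : HasSum (fun n => w n * (D - f n * C - g n * B + f n * g n * A))
      (2 * (D * A - B * C)) := by
    rw [show 2 * (D * A - B * C) = D * A - C * B - B * C + A * D by ring]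
    exact ((((hA.mul_left D).sub (hB.mul_left C)).sub (hC.mul_left B)).add
      (hD.mul_left A)).congr_fun fun n => by ring
  have hcorr_nonneg (n : ι) : 0 ≤ D - f n * C - g n * B + f n * g n * A :=
    (hcorr n).nonneg fun m => mul_nonneg (hw m) (hfg.sub_mul_sub_nonneg n m)
  have hcorr_pos : 0 < D - f i * C - g i * B + f i * g i * A :=
    hasSum_lt (f := fun _ => 0) (i := j) (fun m => mul_nonneg (hw m) (hfg.sub_mul_sub_nonneg i m))
      (mul_pos hj (mul_pos (sub_pos.2 hfij) (sub_pos.2 hgij))) hasSum_zero (hcorr i)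
  have := hasSum_lt (f := fun _ => 0) (i := i) (fun n => mul_nonneg (hw n) (hcorr_nonneg n))
    (mul_pos hi hcorr_pos) hasSum_zero htotal
  linarith

variable {c : ℕ → ℝ} {ρ x : ℝ}

theorem hasSum_mul_Cd
    (h : Summable fun n => c (n + 1) * x ^ n / (n ! : ℝ)) :
    HasSum (fun n : ℕ => (n : ℝ) * (c n * x ^ n / (n ! : ℝ))) (x * Cd c x) := by
  rw [← hasSum_nat_add_iff' 1]
  simp only [Finset.range_one, Finset.sum_singleton, CharP.cast_eq_zero, zero_mul, sub_zero]
  refine (h.hasSum.mul_left x).congr_fun fun n => ?_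
  rw [Nat.factorial_succ]
  push_cast
  field_simp
  ring

theorem mul_le_Cf (hc : ∀ n, 0 ≤ c n) (hx : 0 ≤ x)
    (h : Summable fun n => c n * x ^ n / (n ! : ℝ)) : c 1 * x ≤ Cf c x := by
  simpa [Cf] using h.le_tsum 1 fun n _ => by have := hc n; positivity

theorem le_Cd (hc : ∀ n, 0 ≤ c n) (hx : 0 ≤ x)
    (h : Summable fun n => c (n + 1) * x ^ n / (n ! : ℝ)) : c 1 ≤ Cd c x := by
  simpa [Cd] using h.le_tsum 0 fun n _ => by have := hc (n + 1); positivity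

theorem Cf_pos (hc : ∀ n, 0 ≤ c n) (hc1 : 0 < c 1) (hx : 0 < x)
    (h : Summable fun n => c n * x ^ n / (n ! : ℝ)) : 0 < Cf c x :=
  (mul_pos hc1 hx).trans_le (mul_le_Cf hc hx.le h)

theorem Cd_pos (hc : ∀ n, 0 ≤ c n) (hc1 : 0 < c 1) (hx : 0 ≤ x)
    (h : Summable fun n => c (n + 1) * x ^ n / (n ! : ℝ)) : 0 < Cd c x :=
  hc1.trans_le (le_Cd hc hx h)

theorem Cd_zero (c : ℕ → ℝ) : Cd c 0 = c 1 := by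
  rw [Cd, tsum_eq_single 0 fun n hn => by simp [zero_pow hn]]
  simp

theorem continuousOn_tsum_mul_pow_div_factorial {a : ℕ → ℝ} (ha : ∀ n, 0 ≤ a n)
    (h : Summable fun n => a n * ρ ^ n / (n ! : ℝ)) :
    ContinuousOn (fun x => ∑' n, a n * x ^ n / (n ! : ℝ)) (Icc 0 ρ) := by
  refine continuousOn_tsum (fun n => by fun_prop) h fun n x hx => ?_
  rw [Real.norm_of_nonneg (by have := ha n; have := hx.1; positivity)]
  gcongr
  exacts [ha n, hx.1, hx.2]

theorem exists_two_le_coeff_pos_of_isEquivalent {b α : ℝ} (hb : 0 < b) (hρ : 0 < ρ)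
    (hasym : (fun n : ℕ => c n) ~[atTop]
      (fun n : ℕ => b * (n : ℝ) ^ (-(1 + α)) * ρ⁻¹ ^ n * (n ! : ℝ))) :
    ∃ N, 2 ≤ N ∧ 0 < c N := by
  have hpos :
      ∀ᶠ n : ℕ in atTop, 0 < b * (n : ℝ) ^ (-(1 + α)) * ρ⁻¹ ^ n * (n ! : ℝ) :=
    (eventually_ge_atTop 1).mono fun n hn => by
      have : (0 : ℝ) < n := by exact_mod_cast hn
      positivity
  exact ((eventually_ge_atTop 2).and (hasym.eventually_pos hpos)).exists

theorem continuousOn_mul_Cd_div_Cf (hc : ∀ n, 0 ≤ c n) (hc1 : 0 < c 1) (hρ : 0 < ρ)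
    (hsum : ∀ x ∈ Ioc 0 ρ, Summable fun n => c n * x ^ n / (n ! : ℝ))
    (hsum' : ∀ x ∈ Ioc 0 ρ, Summable fun n => c (n + 1) * x ^ n / (n ! : ℝ)) :
    ContinuousOn (fun x => x * Cd c x / Cf c x) (Ioc 0 ρ) := by
  have hρmem : ρ ∈ Ioc 0 ρ := ⟨hρ, le_rfl⟩
  have hCf : ContinuousOn (Cf c) (Icc 0 ρ) :=
    continuousOn_tsum_mul_pow_div_factorial hc (hsum ρ hρmem)
  have hCd : ContinuousOn (Cd c) (Icc 0 ρ) :=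
    continuousOn_tsum_mul_pow_div_factorial (fun n => hc (n + 1)) (hsum' ρ hρmem)
  exact (continuousOn_id.mul (hCd.mono Ioc_subset_Icc_self)).div
    (hCf.mono Ioc_subset_Icc_self) fun x hx => (Cf_pos hc hc1 hx.1 (hsum x hx)).ne'

theorem strictMonoOn_mul_Cd_div_Cf (hc : ∀ n, 0 ≤ c n) (hc1 : 0 < c 1)
    (hsum : ∀ x ∈ Ioc 0 ρ, Summable fun n => c n * x ^ n / (n ! : ℝ))
    (hsum' : ∀ x ∈ Ioc 0 ρ, Summable fun n => c (n + 1) * x ^ n / (n ! : ℝ))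
    {N : ℕ} (hN : 2 ≤ N) (hcN : 0 < c N) :
    StrictMonoOn (fun x => x * Cd c x / Cf c x) (Ioc 0 ρ) := by
  intro x hx y hy hxy
  have hx0 := hx.1
  rw [div_lt_div_iff₀ (Cf_pos hc hc1 hx0 (hsum x hx)) (Cf_pos hc hc1 hy.1 (hsum y hy))]
  set t := y / x
  have ht : 1 < t := (one_lt_div hx0).2 hxy
  have hscale (n : ℕ) : t ^ n * (c n * x ^ n / (n ! : ℝ)) = c n * y ^ n / (n ! : ℝ) := by
    rw [div_pow]; field_simp
  have hmono : Monovary (fun n : ℕ => (n : ℝ)) (fun n => t ^ n) := fun i j hij =>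
    Nat.cast_le.2 ((pow_lt_pow_iff_right₀ ht).1 hij).le
  refine mul_lt_mul_of_hasSum_of_monovary (w := fun n => c n * x ^ n / (n ! : ℝ))
    (fun n => by have := hc n; positivity) hmono (hsum x hx).hasSum
    (hasSum_mul_Cd (hsum' x hx)) ((hsum y hy).hasSum.congr_fun hscale)
    ((hasSum_mul_Cd (hsum' y hy)).congr_fun fun n => by rw [mul_assoc, hscale])
    (i := 1) (j := N) (by positivity) (by positivity) (by exact_mod_cast hN) ?_
  exact pow_lt_pow_right₀ ht hN

theorem exists_mul_Cd_div_Cf_lt (hc : ∀ n, 0 ≤ c n) (hc1 : 0 < c 1) (hρ : 0 < ρ)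
    (hsum : ∀ x ∈ Ioc 0 ρ, Summable fun n => c n * x ^ n / (n ! : ℝ))
    (hsum' : ∀ x ∈ Ioc 0 ρ, Summable fun n => c (n + 1) * x ^ n / (n ! : ℝ))
    {r : ℝ} (hr : 1 < r) :
    ∃ x ∈ Ioc 0 ρ, x * Cd c x / Cf c x < r := by
  have hCd : ContinuousWithinAt (Cd c) (Ioc 0 ρ) 0 :=
    ((continuousOn_tsum_mul_pow_div_factorial (fun n => hc (n + 1)) (hsum' ρ ⟨hρ, le_rfl⟩))
      0 ⟨le_rfl, hρ.le⟩).mono Ioc_subset_Icc_self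
  have hlim : Tendsto (fun x => Cd c x / c 1) (𝓝[Ioc 0 ρ] 0) (𝓝 1) := by
    simpa [Cd_zero, hc1.ne'] using hCd.tendsto.div_const (c 1)
  have : (𝓝[Ioc 0 ρ] (0 : ℝ)).NeBot := by
    rw [nhdsWithin_Ioc_eq_nhdsGT hρ]; infer_instance
  obtain ⟨x, hxr, hx⟩ := ((hlim.eventually (gt_mem_nhds hr)).and self_mem_nhdsWithin).exists
  refine ⟨x, hx, lt_of_le_of_lt ?_ hxr⟩
  calc x * Cd c x / Cf c x ≤ x * Cd c x / (c 1 * x) :=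
        div_le_div_of_nonneg_left (mul_pos hx.1 (Cd_pos hc hc1 hx.1.le (hsum' x hx))).le
          (mul_pos hc1 hx.1) (mul_le_Cf hc hx.1.le (hsum x hx))
    _ = Cd c x / c 1 := by field_simp [hx.1.ne']

theorem unique_solution_of_mean_equation_general (c : ℕ → ℝ) (b ρ α : ℝ)
    (hcnn : ∀ n, 0 ≤ c n) (hc1 : 0 < c 1)
    (hb : 0 < b) (hρ : 0 < ρ)
    (hasym : (fun n : ℕ => c n) ~[atTop]
      (fun n : ℕ => b * (n : ℝ) ^ (-(1 + α)) * ρ⁻¹ ^ n * (n ! : ℝ)))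
    (hsum : ∀ x ∈ Set.Ioc (0 : ℝ) ρ, Summable (fun n : ℕ => c n * x ^ n / (n ! : ℝ)))
    (hsum' : ∀ x ∈ Set.Ioc (0 : ℝ) ρ, Summable (fun n : ℕ => c (n + 1) * x ^ n / (n ! : ℝ)))
    (lam : ℝ) (hlam : lam ∈ Set.Ico (lamStar c ρ) 1) :
    ∃! x : ℝ, x ∈ Set.Ioc (0 : ℝ) ρ ∧ x * Cd c x / Cf c x = 1 / lam := by
  have hρmem : ρ ∈ Ioc 0 ρ := ⟨hρ, le_rfl⟩
  obtain ⟨N, hN, hcN⟩ := exists_two_le_coeff_pos_of_isEquivalent hb hρ hasym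
  have hmono := strictMonoOn_mul_Cd_div_Cf hcnn hc1 hsum hsum' hN hcN
  have hlamStar : 0 < lamStar c ρ :=
    div_pos (Cf_pos hcnn hc1 hρ (hsum ρ hρmem))
      (mul_pos hρ (Cd_pos hcnn hc1 hρ.le (hsum' ρ hρmem)))
  have hlam0 : 0 < lam := hlamStar.trans_le hlam.1
  obtain ⟨x₀, hx₀, hx₀lt⟩ :=
    exists_mul_Cd_div_Cf_lt hcnn hc1 hρ hsum hsum' (one_lt_one_div hlam0 hlam.2)
  have hρge : 1 / lam ≤ ρ * Cd c ρ / Cf c ρ := by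
    rw [← one_div_div (Cf c ρ)]
    exact one_div_le_one_div_of_le hlamStar hlam.1
  have hcont := (continuousOn_mul_Cd_div_Cf hcnn hc1 hρ hsum hsum').mono
    ((Icc_subset_Ioc_iff hx₀.2).2 ⟨hx₀.1, le_rfl⟩)
  obtain ⟨x, hx, hφx⟩ := intermediate_value_Icc hx₀.2 hcont ⟨hx₀lt.le, hρge⟩
  have hxmem : x ∈ Ioc 0 ρ := ⟨hx₀.1.trans_le hx.1, hx.2⟩
  exact ⟨x, ⟨hxmem, hφx⟩, fun y hy => hmono.injOn hy.1 hxmem (hy.2.trans hφx.symm)⟩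

/-- For every `λ ∈ [λ*, 1)` there is a unique `x ∈ (0, ρ]` with `x·C'(x)/C(x) = 1/λ`. -/
theorem unique_solution_of_mean_equation (c : ℕ → ℝ) (b ρ α : ℝ)
    (hc0 : c 0 = 0) (hcnn : ∀ n, 0 ≤ c n) (hc1 : 0 < c 1)
    (hb : 0 < b) (hρ : 0 < ρ) (hα : 1 < α)
    (hasym : (fun n : ℕ => c n) ~[atTop]
      (fun n : ℕ => b * (n : ℝ) ^ (-(1 + α)) * ρ⁻¹ ^ n * (n ! : ℝ)))
    (hsum : ∀ x ∈ Set.Ioc (0 : ℝ) ρ, Summable (fun n : ℕ => c n * x ^ n / (n ! : ℝ)))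
    (hsum' : ∀ x ∈ Set.Ioc (0 : ℝ) ρ, Summable (fun n : ℕ => c (n + 1) * x ^ n / (n ! : ℝ)))
    (lam : ℝ) (hlam : lam ∈ Set.Ico (lamStar c ρ) 1) :
    ∃! x : ℝ, x ∈ Set.Ioc (0 : ℝ) ρ ∧ x * Cd c x / Cf c x = 1 / lam :=
  unique_solution_of_mean_equation_general c b ρ α hcnn hc1 hb hρ hasym hsum hsum' lam hlam
end

section
/- Suppose c : ℕ → ℝ is nonnegative and c n is asymptotically equivalent to b·n^{-(1+α)}·ρ^{-n}·n! as n → ∞, for constants b > 0, ρ > 0 and α > 1. Then the tail sums satisfy: ∑_{m > n} (c m)·ρᵐ/m! is asymptotically equivalent to (b/α)·n^{-α} as n → ∞. -/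
/-!
Multiplying the hypothesis by `ρᵐ / m!` gives `c m ρᵐ / m! ~ b m^{-(1+α)}`. Tail sums preserve
asymptotic equivalence against a summable, eventually nonnegative sequence, and by the mean value
theorem `m^{-(1+α)} ~ (m^{-α} - (m+1)^{-α}) / α`, whose tails telescope to
`(n+1)^{-α} / α ~ n^{-α} / α`.
-/

open Asymptotics Filter Nat Topology

namespace Asymptotics

theorem IsEquivalent.of_le_of_le {α : Type*} {l : Filter α} {u v w : α → ℝ}
    (hw : w ~[l] v) (hwu : ∀ᶠ x in l, w x ≤ u x) (huv : ∀ᶠ x in l, u x ≤ v x) : u ~[l] v := by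
  refine IsBigO.trans_isLittleO (IsBigO.of_bound' ?_) hw.isLittleO
  filter_upwards [hwu, huv] with x h₁ h₂
  simp only [Pi.sub_apply, Real.norm_eq_abs]
  rw [abs_of_nonpos (by linarith), abs_of_nonpos (by linarith)]
  linarith

theorem isEquivalent_natCast_add_one_rpow (p : ℝ) :
    (fun n : ℕ => ((n : ℝ) + 1) ^ p) ~[atTop] fun n : ℕ => (n : ℝ) ^ p := by
  have h : (fun n : ℕ => (n : ℝ) + 1) ~[atTop] fun n : ℕ => (n : ℝ) :=
    IsEquivalent.refl.add_const_of_norm_tendsto_atTop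
      (tendsto_norm_atTop_atTop.comp tendsto_natCast_atTop_atTop)
  exact h.rpow (fun n => n.cast_nonneg)

theorem IsEquivalent.tsum_ite_lt {u v : ℕ → ℝ} (h : u ~[atTop] v)
    (hv : Summable v) (hv₀ : ∀ᶠ m in atTop, 0 ≤ v m) :
    (fun n => ∑' m, if n < m then u m else 0) ~[atTop]
      fun n => ∑' m, if n < m then v m else 0 := by
  rw [IsEquivalent, isLittleO_iff]
  intro ε hε
  obtain ⟨N, hN⟩ := eventually_atTop.1 ((isLittleO_iff.1 h.isLittleO hε).and hv₀)
  filter_upwards [eventually_ge_atTop N] with n hn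
  have htail : ∀ w : ℕ → ℝ, Summable w → Summable fun m => if n < m then w m else 0 :=
    fun w hw => hw.norm.of_norm_bounded fun m => by split_ifs <;> simp
  have hdiff : ∀ m, ‖(if n < m then u m else 0) - (if n < m then v m else 0)‖ ≤
      ε * (if n < m then v m else 0) := by
    intro m
    split_ifs with hm
    · obtain ⟨hle, hv₀⟩ := hN m (by omega)
      rwa [Real.norm_of_nonneg hv₀] at hle
    · simp
  calc ‖(∑' m, if n < m then u m else 0) - ∑' m, if n < m then v m else 0‖
      = ‖∑' m, ((if n < m then u m else 0) - if n < m then v m else 0)‖ := by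
        rw [(htail u (summable_of_isEquivalent_nat hv h)).tsum_sub (htail v hv)]
    _ ≤ ε * ∑' m, if n < m then v m else 0 :=
        tsum_of_norm_bounded ((htail v hv).hasSum.mul_left ε) hdiff
    _ ≤ ε * ‖∑' m, if n < m then v m else 0‖ := by gcongr; exact Real.le_norm_self _

end Asymptotics

theorem hasSum_sub_succ_of_antitone {f : ℕ → ℝ} {l : ℝ} (hf : Antitone f)
    (hl : Tendsto f atTop (𝓝 l)) : HasSum (fun k => f k - f (k + 1)) (f 0 - l) := by
  rw [hasSum_iff_tendsto_nat_of_nonneg (fun k => sub_nonneg.2 (hf k.le_succ))]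
  simp_rw [Finset.sum_range_sub']
  exact tendsto_const_nhds.sub hl

theorem hasSum_ite_lt_iff {M : Type*} [AddCommMonoid M] [TopologicalSpace M] {f : ℕ → M}
    {a : M} (n : ℕ) :
    HasSum (fun m => if n < m then f m else 0) a ↔ HasSum (fun k => f (k + (n + 1))) a := by
  rw [← (add_left_injective (n + 1)).hasSum_iff (f := fun m => if n < m then f m else 0)]
  · simp only [Function.comp_def, show ∀ k, n < k + (n + 1) from fun k => by omega, if_true]
  · intro m hm
    rw [if_neg]
    exact fun h => hm ⟨m - (n + 1), Nat.sub_add_cancel h⟩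

theorem hasSum_ite_lt_sub_succ {f : ℕ → ℝ} {l : ℝ} (n : ℕ)
    (hf : AntitoneOn f (Set.Ioi n)) (hl : Tendsto f atTop (𝓝 l)) :
    HasSum (fun m => if n < m then f m - f (m + 1) else 0) (f (n + 1) - l) := by
  rw [hasSum_ite_lt_iff]
  simpa [add_right_comm _ 1] using hasSum_sub_succ_of_antitone (f := fun k => f (k + (n + 1)))
    (fun i j hij => hf (Set.mem_Ioi.2 (by omega)) (Set.mem_Ioi.2 (by omega)) (by omega))
    (hl.comp (tendsto_add_atTop_nat _))

theorem exists_rpow_neg_sub_rpow_neg_eq {x α : ℝ} (hx : 0 < x) :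
    ∃ ξ ∈ Set.Ioo x (x + 1), x ^ (-α) - (x + 1) ^ (-α) = α * ξ ^ (-(1 + α)) := by
  obtain ⟨ξ, hξ, h⟩ := exists_hasDerivAt_eq_slope (fun y : ℝ => y ^ (-α))
    (fun y => -α * y ^ (-α - 1)) (lt_add_one x)
    (continuousOn_id.rpow_const fun y hy => Or.inl (hx.trans_le hy.1).ne')
    (fun y hy => Real.hasDerivAt_rpow_const (Or.inl (hx.trans hy.1).ne'))
  refine ⟨ξ, hξ, ?_⟩
  rw [add_sub_cancel_left, div_one] at h
  rw [show -(1 + α) = -α - 1 by ring]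
  linarith

theorem isEquivalent_rpow_neg_sub_rpow_neg {α : ℝ} (hα : 0 < α) :
    (fun n : ℕ => ((n : ℝ) ^ (-α) - ((n : ℝ) + 1) ^ (-α)) / α) ~[atTop]
      fun n : ℕ => (n : ℝ) ^ (-(1 + α)) := by
  have hbounds : ∀ᶠ n : ℕ in atTop,
      ((n : ℝ) + 1) ^ (-(1 + α)) ≤ ((n : ℝ) ^ (-α) - ((n : ℝ) + 1) ^ (-α)) / α ∧
      ((n : ℝ) ^ (-α) - ((n : ℝ) + 1) ^ (-α)) / α ≤ (n : ℝ) ^ (-(1 + α)) := by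
    filter_upwards [eventually_gt_atTop 0] with n hn
    have hn : (0 : ℝ) < n := by exact_mod_cast hn
    obtain ⟨ξ, ⟨hnξ, hξn⟩, h⟩ := exists_rpow_neg_sub_rpow_neg_eq (α := α) hn
    rw [h, mul_div_cancel_left₀ _ hα.ne']
    exact ⟨Real.rpow_le_rpow_of_nonpos (hn.trans hnξ) hξn.le (by linarith),
      Real.rpow_le_rpow_of_nonpos hn hnξ.le (by linarith)⟩
  exact (isEquivalent_natCast_add_one_rpow _).of_le_of_le
    (hbounds.mono fun _ h => h.1) (hbounds.mono fun _ h => h.2)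

theorem hasSum_ite_lt_rpow_neg_sub_rpow_neg {α : ℝ} (hα : 0 < α) (n : ℕ) :
    HasSum (fun m : ℕ => if n < m then ((m : ℝ) ^ (-α) - ((m : ℝ) + 1) ^ (-α)) / α else 0)
      (((n : ℝ) + 1) ^ (-α) / α) := by
  have hf : AntitoneOn (fun m : ℕ => (m : ℝ) ^ (-α)) (Set.Ioi n) := fun i hi j _ hij =>
    Real.rpow_le_rpow_of_nonpos (Nat.cast_pos.2 (Nat.zero_lt_of_lt hi)) (by exact_mod_cast hij)
      (by linarith)
  have h := (hasSum_ite_lt_sub_succ n hf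
    ((tendsto_rpow_neg_atTop hα).comp tendsto_natCast_atTop_atTop)).div_const α
  simpa [ite_div] using h

theorem tail_sum_asymptotics_general (c : ℕ → ℝ) (b ρ α : ℝ)
    (hb : 0 < b) (hρ : 0 < ρ) (hα : 1 < α)
    (hasym : (fun n : ℕ => c n) ~[atTop]
      (fun n : ℕ => b * (n : ℝ) ^ (-(1 + α)) * ρ⁻¹ ^ n * (n ! : ℝ))) :
    (fun n : ℕ => ∑' m : ℕ, if n < m then c m * ρ ^ m / (m ! : ℝ) else 0)
      ~[atTop]
    (fun n : ℕ => b / α * (n : ℝ) ^ (-α)) := by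
  have hα₀ : 0 < α := by linarith
  set D : ℕ → ℝ := fun m => ((m : ℝ) ^ (-α) - ((m : ℝ) + 1) ^ (-α)) / α
  have hD : D ~[atTop] fun m => (m : ℝ) ^ (-(1 + α)) := isEquivalent_rpow_neg_sub_rpow_neg hα₀
  have hterm : (fun m => c m * ρ ^ m / (m ! : ℝ)) ~[atTop] fun m => b * D m := by
    refine ((hasym.mul (IsEquivalent.refl (u := fun m : ℕ => ρ ^ m / (m ! : ℝ)))).congr_left
      (.of_eq ?_)).congr_right (.of_eq ?_) |>.trans (IsEquivalent.refl.mul hD.symm)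
    · ext m; simp only [Pi.mul_apply]; ring
    · ext m
      simp only [Pi.mul_apply, inv_pow]
      field_simp [pow_ne_zero m hρ.ne', Nat.cast_ne_zero.2 m.factorial_ne_zero]
  have hsum : Summable fun m => b * D m :=
    (hD.summable_iff_nat.2 (Real.summable_nat_rpow.2 (by linarith))).mul_left b
  have hnonneg : ∀ᶠ m in atTop, 0 ≤ b * D m :=
    (hD.eventually_nonneg (.of_forall fun m => by positivity)).mono fun _ hm => mul_nonneg hb.le hm
  have htail (n : ℕ) : (∑' m, if n < m then b * D m else 0) = b / α * ((n : ℝ) + 1) ^ (-α) := by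
    have hite (m : ℕ) : (if n < m then b * D m else 0) = b * (if n < m then D m else 0) := by
      split_ifs <;> simp
    rw [tsum_congr hite, tsum_mul_left, (hasSum_ite_lt_rpow_neg_sub_rpow_neg hα₀ n).tsum_eq]
    ring
  exact ((hterm.tsum_ite_lt hsum hnonneg).congr_right (.of_forall htail)).trans
    (IsEquivalent.refl.mul (isEquivalent_natCast_add_one_rpow (-α)))

/-- If `c n ∼ b·n^{-(1+α)}·ρ^{-n}·n!` with `b, ρ > 0` and `α > 1`, then the tail sums
satisfy `∑_{m > n} c m · ρᵐ/m! ∼ (b/α)·n^{-α}` as `n → ∞`. -/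
theorem tail_sum_asymptotics (c : ℕ → ℝ) (b ρ α : ℝ)
    (hcnn : ∀ n, 0 ≤ c n) (hb : 0 < b) (hρ : 0 < ρ) (hα : 1 < α)
    (hasym : (fun n : ℕ => c n) ~[atTop]
      (fun n : ℕ => b * (n : ℝ) ^ (-(1 + α)) * ρ⁻¹ ^ n * (n ! : ℝ))) :
    (fun n : ℕ => ∑' m : ℕ, if n < m then c m * ρ ^ m / (m ! : ℝ) else 0)
      ~[atTop]
    (fun n : ℕ => b / α * (n : ℝ) ^ (-α)) :=
  tail_sum_asymptotics_general c b ρ α hb hρ hα hasym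
end

section
/- Let B and C be formal power series over ℝ with zero constant term, and assume additionally that the linear coefficient of B is zero. Write D := X·C' (so D has zero constant term) and suppose the block-decomposition equation X·C' = X·exp(B' ∘ D) holds, where B' denotes the formal derivative of B, ∘ denotes composition of formal power series, and exp is the formal exponential. Then C = D − D·(B' ∘ D) + (B ∘ D) as formal power series. -/
/-!
Put `D = X·C'` and `E = B' ∘ D`. Both sides vanish at `0`, so it suffices to compare
derivatives. By the chain rule the right-hand side has derivative `D' − D·E'`, while
`C' = exp E` gives `D' = C' + X·C'' = C' + X·exp(E)·E' = C' + D·E'`.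
-/

open PowerSeries

/-- Composition `f ∘ g` of formal power series (meaningful whenever the inner series `g`
has zero constant term, in which case `coeff n (g^k) = 0` for `k > n`). -/
noncomputable def psComp (f g : PowerSeries ℝ) : PowerSeries ℝ :=
  PowerSeries.mk fun n => ∑ k ∈ Finset.range (n + 1),
    PowerSeries.coeff k f * PowerSeries.coeff n (g ^ k)

/-- Formal exponential `exp(g)` of a power series `g` with zero constant term,
defined as the composition of the exponential series with `g`. -/
noncomputable def psExp (g : PowerSeries ℝ) : PowerSeries ℝ :=
  psComp (PowerSeries.exp ℝ) g

theorem coeff_pow_eq_zero_of_lt {R : Type*} [CommSemiring R] {g : R⟦X⟧}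
    (hg : constantCoeff g = 0) {n k : ℕ} (h : n < k) : coeff n (g ^ k) = 0 :=
  X_pow_dvd_iff.mp (pow_dvd_pow_of_dvd (X_dvd_iff.mpr hg) k) n h

theorem psComp_eq_subst {g : ℝ⟦X⟧} (hg : constantCoeff g = 0) (f : ℝ⟦X⟧) :
    psComp f g = f.subst g := by
  ext n
  rw [coeff_subst' (HasSubst.of_constantCoeff_zero' hg),
    finsum_eq_sum_of_support_subset (s := Finset.range (n + 1))]
  · simp [psComp, smul_eq_mul]
  · intro k hk
    by_contra hkn
    rw [Finset.coe_range, Set.mem_Iio, not_lt] at hkn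
    exact hk (by simp only [coeff_pow_eq_zero_of_lt hg (show n < k by omega), smul_zero])

theorem constantCoeff_psComp (f g : ℝ⟦X⟧) : constantCoeff (psComp f g) = constantCoeff f := by
  rw [← coeff_zero_eq_constantCoeff_apply, psComp, coeff_mk]
  simp

theorem derivative_psComp {g : ℝ⟦X⟧} (hg : constantCoeff g = 0) (f : ℝ⟦X⟧) :
    derivative ℝ (psComp f g) = psComp (derivative ℝ f) g * derivative ℝ g := by
  rw [psComp_eq_subst hg, psComp_eq_subst hg,
    derivative_subst (HasSubst.of_constantCoeff_zero' hg)]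

theorem derivative_psExp {g : ℝ⟦X⟧} (hg : constantCoeff g = 0) :
    derivative ℝ (psExp g) = psExp g * derivative ℝ g := by
  rw [psExp, derivative_psComp hg, derivative_exp]

theorem derivative_sub_mul_psComp_derivative_add_psComp {D : ℝ⟦X⟧} (hD : constantCoeff D = 0)
    (B : ℝ⟦X⟧) :
    derivative ℝ (D - D * psComp (derivative ℝ B) D + psComp B D) =
      derivative ℝ D - D * derivative ℝ (psComp (derivative ℝ B) D) := by
  rw [map_add, map_sub, derivative_psComp hD B, Derivation.leibniz, smul_eq_mul, smul_eq_mul]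
  ring

/-- If `B` and `C` are formal power series with zero constant term, `B` also has zero
linear coefficient, and the block-decomposition equation `X·C' = X·exp(B' ∘ (X·C'))`
holds, then `C = D − D·(B' ∘ D) + (B ∘ D)` where `D = X·C'`. -/
theorem block_decomposition_identity (B C : PowerSeries ℝ)
    (hB0 : PowerSeries.constantCoeff B = 0)
    (hC0 : PowerSeries.constantCoeff C = 0)
    (hB1 : PowerSeries.coeff 1 B = 0)
    (heq : PowerSeries.X * (PowerSeries.derivative ℝ C) =
      PowerSeries.X *
        psExp (psComp (PowerSeries.derivative ℝ B)
          (PowerSeries.X * PowerSeries.derivative ℝ C))) :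
    C = PowerSeries.X * PowerSeries.derivative ℝ C
        - (PowerSeries.X * PowerSeries.derivative ℝ C) *
            psComp (PowerSeries.derivative ℝ B)
              (PowerSeries.X * PowerSeries.derivative ℝ C)
        + psComp B (PowerSeries.X * PowerSeries.derivative ℝ C) := by
  set D := X * derivative ℝ C with hD
  set E := psComp (derivative ℝ B) D
  have hD0 : constantCoeff D = 0 := by simp [hD]
  have hE0 : constantCoeff E = 0 := by
    rw [constantCoeff_psComp, ← coeff_zero_eq_constantCoeff_apply, coeff_derivative, hB1,
      zero_mul]
  have hC' : derivative ℝ C = psExp E := mul_left_cancel₀ X_ne_zero heq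
  have hD' : derivative ℝ D - D * derivative ℝ E = derivative ℝ C := by
    rw [hD, Derivation.leibniz, smul_eq_mul, smul_eq_mul, derivative_X, hC',
      derivative_psExp hE0]
    ring
  apply derivative.ext
  · rw [derivative_sub_mul_psComp_derivative_add_psComp hD0, hD']
  · simp [hC0, hD0, hB0, constantCoeff_psComp]
end
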